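/- arXiv:2201.12410 — 2 statements merged into one kernel-verified Lean document; each statement's English description precedes it below -/
import Mathlib

section
/- Let D be a k-minimal digraph with a complete acyclic k-coloring with color classes V_1,…,V_k of sizes q_1,…,q_k. For each i, let X_i be a relabel factorization of the complete symmetric digraph K_{m_i} into q_i arc-disjoint spanning factors, one factor assigned to each vertex of V_i. Then the Zykov sum D[X], where X is the union of all X_i, is t-minimal with t = m_1 + m_2 + ⋯ + m_k. -/
/-- A set of vertices is acyclic in a digraph if the induced subdigraph
contains no directed cycle (no vertex reaches itself through the set). -/
def Digraph.AcyclicOn {V : Type*} (D : Digraph V) (S : Set V) : Prop :=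
  ¬ ∃ v, Relation.TransGen (fun a b => a ∈ S ∧ b ∈ S ∧ D.Adj a b) v v

/-- A `k`-coloring is acyclic if every color class induces an acyclic subdigraph. -/
def Digraph.IsAcyclicColoring {V : Type*} {k : ℕ} (D : Digraph V) (c : V → Fin k) : Prop :=
  ∀ i : Fin k, D.AcyclicOn {v | c v = i}

/-- A `k`-coloring is complete if for every ordered pair of distinct colors
there is at least one arc from the first color to the second. -/
def Digraph.IsCompleteColoring {V : Type*} {k : ℕ} (D : Digraph V) (c : V → Fin k) : Prop :=
  ∀ i j : Fin k, i ≠ j → ∃ u v, D.Adj u v ∧ c u = i ∧ c v = j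

/-- A coloring is proper if no arc joins two vertices of the same color. -/
def Digraph.IsProperColoring {V : Type*} {k : ℕ} (D : Digraph V) (c : V → Fin k) : Prop :=
  ∀ u v, D.Adj u v → c u ≠ c v

/-- A coloring is harmonious if it is proper and for every ordered pair of
distinct colors there is at most one arc from the first color to the second. -/
def Digraph.IsHarmoniousColoring {V : Type*} {k : ℕ} (D : Digraph V) (c : V → Fin k) : Prop :=
  D.IsProperColoring c ∧
    ∀ u v u' v', D.Adj u v → D.Adj u' v' → c u = c u' → c v = c v' → c u ≠ c v →
      u = u' ∧ v = v'

/-- A coloring is balanced if all color classes have the same cardinality. -/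
def IsBalancedColoring {V : Type*} {k : ℕ} (c : V → Fin k) : Prop :=
  ∀ i j : Fin k, Nat.card {v // c v = i} = Nat.card {v // c v = j}

/-- The dichromatic number: the least `k` admitting an acyclic `k`-coloring. -/
noncomputable def Digraph.dichromaticNumber {V : Type*} (D : Digraph V) : ℕ :=
  sInf {k | ∃ c : V → Fin k, D.IsAcyclicColoring c}

/-- The diachromatic number: the greatest `k` admitting an acyclic complete `k`-coloring. -/
noncomputable def Digraph.diachromaticNumber {V : Type*} (D : Digraph V) : ℕ :=
  sSup {k | ∃ c : V → Fin k, D.IsAcyclicColoring c ∧ D.IsCompleteColoring c}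

/-- The harmonious chromatic number: the least `k` admitting a harmonious `k`-coloring. -/
noncomputable def Digraph.harmoniousNumber {V : Type*} (D : Digraph V) : ℕ :=
  sInf {k | ∃ c : V → Fin k, D.IsHarmoniousColoring c}

/-- The number of arcs (the size) of a digraph. -/
noncomputable def Digraph.arcCount {V : Type*} (D : Digraph V) : ℕ :=
  Nat.card {p : V × V // D.Adj p.1 p.2}

/-- Deletion of the arc `(u, v)` from a digraph. -/
def Digraph.deleteArc {V : Type*} (D : Digraph V) (u v : V) : Digraph V :=
  ⟨fun a b => D.Adj a b ∧ ¬(a = u ∧ b = v)⟩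

/-- A digraph is `k`-minimal if its diachromatic number is `k` and deleting
any arc decreases the diachromatic number below `k`. -/
def Digraph.IsKMinimal {V : Type*} (D : Digraph V) (k : ℕ) : Prop :=
  D.diachromaticNumber = k ∧
    ∀ u v, D.Adj u v → (D.deleteArc u v).diachromaticNumber < k

/-- The complete symmetric digraph on a vertex type. -/
def completeDigraph (V : Type*) : Digraph V := ⟨fun a b => a ≠ b⟩

/-- The directed cycle on `m` vertices. -/
def dirCycle (m : ℕ) : Digraph (ZMod m) := ⟨fun a b => b = a + 1⟩

/-- The lexicographic product of digraphs. -/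
def lexProd {V W : Type*} (D : Digraph V) (H : Digraph W) : Digraph (V × W) :=
  ⟨fun x y => D.Adj x.1 y.1 ∨ (x.1 = y.1 ∧ H.Adj x.2 y.2)⟩

/-- Vertex type of the `i`-fold iterated lexicographic product. -/
def iterType (V W : Type u) : ℕ → Type u
  | 0 => V
  | i + 1 => iterType V W i × W

/-- The iterated lexicographic product `D[H]^i` (with `D[H]^0 = D`). -/
def iterLex {V W : Type u} (D : Digraph V) (H : Digraph W) : (i : ℕ) → Digraph (iterType V W i)
  | 0 => D
  | i + 1 => lexProd (iterLex D H i) H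

/-- The Zykov sum of the family `H` of mutually vertex-disjoint digraphs over `D`. -/
def zykovSum {V : Type*} {W : V → Type*} (D : Digraph V) (H : ∀ u, Digraph (W u)) :
    Digraph (Σ u, W u) :=
  ⟨fun x y => D.Adj x.1 y.1 ∨ ∃ h : x.1 = y.1, (H y.1).Adj (h ▸ x.2) y.2⟩


private lemma acyclicOn_mono' {X : Type*} {E E' : Digraph X}
    (hle : ∀ a b, E'.Adj a b → E.Adj a b) {S : Set X} (h : E.AcyclicOn S) :
    E'.AcyclicOn S := by
  rintro ⟨v, hv⟩
  exact h ⟨v, Relation.TransGen.mono (fun a b hab => ⟨hab.1, hab.2.1, hle a b hab.2.2⟩) v v hv⟩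

private lemma card_ne_pairs (N : ℕ) :
    Nat.card {p : Fin N × Fin N // p.1 ≠ p.2} = N * (N - 1) := by
  have e1 : {p : Fin N × Fin N // p.1 = p.2} ≃ Fin N :=
    ⟨fun p => p.1.1, fun i => ⟨(i, i), rfl⟩,
     fun p => by obtain ⟨⟨a, b⟩, h⟩ := p; cases h; rfl, fun i => rfl⟩
  have h1 : Nat.card {p : Fin N × Fin N // p.1 = p.2} = N := by
    rw [Nat.card_congr e1, Nat.card_eq_fintype_card, Fintype.card_fin]
  have h2 : Nat.card {p : Fin N × Fin N // p.1 ≠ p.2}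
      = Nat.card (Fin N × Fin N) - Nat.card {p : Fin N × Fin N // p.1 = p.2} := by
    simp only [Nat.card_eq_fintype_card]
    exact Fintype.card_subtype_compl _
  rw [h2, h1]
  simp [Nat.mul_sub]

private lemma complete_bound' {X : Type*} [Fintype X] (E : Digraph X) {N : ℕ} (c : X → Fin N)
    (h : E.IsCompleteColoring c) : N * (N - 1) ≤ E.arcCount := by
  rw [← card_ne_pairs N]
  have hex : ∀ p : {p : Fin N × Fin N // p.1 ≠ p.2}, ∃ q : {q : X × X // E.Adj q.1 q.2},
      c q.1.1 = p.1.1 ∧ c q.1.2 = p.1.2 := by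
    rintro ⟨⟨i, j⟩, hij⟩
    obtain ⟨u, v, ha, hu, hv⟩ := h i j hij
    exact ⟨⟨(u, v), ha⟩, hu, hv⟩
  choose f hf1 hf2 using hex
  have hinj : Function.Injective f := by
    intro p q hpq
    exact Subtype.ext (Prod.ext (by rw [← hf1 p, ← hf1 q, hpq]) (by rw [← hf2 p, ← hf2 q, hpq]))
  exact Nat.card_le_card_of_injective f hinj

private lemma dac_bddAbove' {X : Type*} [Fintype X] (E : Digraph X) :
    BddAbove {n | ∃ c : X → Fin n, E.IsAcyclicColoring c ∧ E.IsCompleteColoring c} := by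
  refine ⟨E.arcCount + 1, ?_⟩
  rintro N ⟨c, -, hc⟩
  have h1 := complete_bound' E c hc
  rcases Nat.lt_or_ge N 2 with h | h
  · omega
  · have h2 : N ≤ N * (N - 1) := Nat.le_mul_of_pos_right _ (by omega)
    omega

private lemma dac_ge' {X : Type*} [Fintype X] (E : Digraph X) {N : ℕ} (c : X → Fin N)
    (h1 : E.IsAcyclicColoring c) (h2 : E.IsCompleteColoring c) : N ≤ E.diachromaticNumber :=
  le_csSup (dac_bddAbove' E) ⟨c, h1, h2⟩

private noncomputable def zykE {k : ℕ} (m : Fin k → ℕ) :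
    (Σ i : Fin k, Fin (m i)) ≃ Fin (∑ i, m i) :=
  Fintype.equivFinOfCardEq (by simp)

theorem stmt3 {V : Type} [Fintype V] (D : Digraph V) (k : ℕ) (c : V → Fin k)
    (hmin : D.IsKMinimal k)
    (hac : D.IsAcyclicColoring c) (hcomp : D.IsCompleteColoring c)
    (m : Fin k → ℕ) (hm : ∀ i, 2 ≤ m i)
    (H : ∀ u : V, Digraph (Fin (m (c u))))
    (hloop : ∀ u a, ¬ (H u).Adj a a)
    (hfact : ∀ (i : Fin k) (a b : Fin (m i)), a ≠ b →
      ∃! u : V, ∃ h : c u = i,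
        (H u).Adj (Fin.cast (congrArg m h.symm) a) (Fin.cast (congrArg m h.symm) b)) :
    (zykovSum D H).IsKMinimal (∑ i, m i) := by
  classical
  rcases Nat.eq_zero_or_pos k with hk0 | hkpos
  · exfalso
    have hVempty : IsEmpty V := ⟨fun v => Fin.elim0 (hk0 ▸ c v)⟩
    have h1 : (1 : ℕ) ≤ D.diachromaticNumber := by
      refine dac_ge' D (fun v => hVempty.elim v) ?_ ?_
      · intro i
        rintro ⟨v, -⟩
        exact hVempty.elim v
      · intro i j hij
        exact absurd (Subsingleton.elim i j) hij
    rw [hmin.1] at h1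
    omega
  have ht2 : 2 ≤ ∑ i, m i :=
    le_trans (hm ⟨0, hkpos⟩)
      (Finset.single_le_sum (fun i _ => Nat.zero_le (m i)) (Finset.mem_univ (⟨0, hkpos⟩ : Fin k)))
  -- `c` is proper
  have hcP : ∀ u v, D.Adj u v → c u ≠ c v := by
    intro u v huv heq
    have hk := hmin.2 u v huv
    have hge : k ≤ (D.deleteArc u v).diachromaticNumber := by
      refine dac_ge' _ c (fun i => acyclicOn_mono' (fun a b (h : (D.deleteArc u v).Adj a b) => h.1) (hac i)) ?_
      intro i j hij
      obtain ⟨w, x, hwx, hw, hx⟩ := hcomp i j hij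
      refine ⟨w, x, ⟨hwx, ?_⟩, hw, hx⟩
      rintro ⟨rfl, rfl⟩
      exact hij (by rw [← hw, heq, hx])
    omega
  -- `c` is harmonious (uniqueness of arcs per ordered pair of colors)
  have hcU : ∀ u v u' v', D.Adj u v → D.Adj u' v' → c u = c u' → c v = c v' →
      u = u' ∧ v = v' := by
    intro u v u' v' h1 h2 hcu hcv
    by_contra hne
    have hk := hmin.2 u v h1
    have hge : k ≤ (D.deleteArc u v).diachromaticNumber := by
      refine dac_ge' _ c (fun i => acyclicOn_mono' (fun a b (h : (D.deleteArc u v).Adj a b) => h.1) (hac i)) ?_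
      intro i j hij
      obtain ⟨w, x, hwx, hw, hx⟩ := hcomp i j hij
      by_cases hwu : w = u ∧ x = v
      · obtain ⟨rfl, rfl⟩ := hwu
        refine ⟨u', v', ⟨h2, ?_⟩, by rw [← hcu]; exact hw, by rw [← hcv]; exact hx⟩
        rintro ⟨rfl, rfl⟩
        exact hne ⟨rfl, rfl⟩
      · exact ⟨w, x, ⟨hwx, hwu⟩, hw, hx⟩
    omega
  -- the coloring of the Zykov sum
  have hval : ∀ (i j : Fin k) (x : Fin (m i)) (y : Fin (m j)),
      (⟨i, x⟩ : Σ i, Fin (m i)) = ⟨j, y⟩ → i = j ∧ (x : ℕ) = (y : ℕ) := by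
    intro i j x y h
    have h1 : i = j := congrArg Sigma.fst h
    subst h1
    have h2 : x = y := by simpa using h
    exact ⟨rfl, by rw [h2]⟩
  have hcast2 : ∀ (u : V) (i : Fin k) (h : c u = i) (a : Fin (m i)),
      (⟨c u, Fin.cast (congrArg m h.symm) a⟩ : Σ i, Fin (m i)) = ⟨i, a⟩ := by
    intro u i h a
    subst h
    rfl
  set ς : (Σ u : V, Fin (m (c u))) → Fin (∑ i, m i) :=
    fun x => zykE m ⟨c x.1, x.2⟩ with hςdef
  have hςeq : ∀ x y : Σ u : V, Fin (m (c u)), ς x = ς y →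
      c x.1 = c y.1 ∧ (x.2 : ℕ) = (y.2 : ℕ) := by
    intro x y h
    exact hval _ _ _ _ ((zykE m).injective h)
  -- properness of ς
  have hςP : ∀ x y, (zykovSum D H).Adj x y → ς x ≠ ς y := by
    rintro ⟨u, a⟩ ⟨v, b⟩ hadj heq
    obtain ⟨hc1, hv1⟩ := hςeq _ _ heq
    have hadj' : D.Adj u v ∨ ∃ h : u = v, (H v).Adj (h ▸ a) b := hadj
    rcases hadj' with h | ⟨h, ha⟩
    · exact hcP u v h hc1
    · subst h
      have hab : a = b := Fin.ext hv1
      subst hab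
      exact hloop u a ha
  -- completeness of ς
  have hςcomp : (zykovSum D H).IsCompleteColoring ς := by
    intro P Q hPQ
    obtain ⟨⟨i, a⟩, rfl⟩ := (zykE m).surjective P
    obtain ⟨⟨j, b⟩, rfl⟩ := (zykE m).surjective Q
    by_cases hij : i = j
    · subst hij
      have hab : a ≠ b := by rintro rfl; exact hPQ rfl
      obtain ⟨u, ⟨hu, hadj⟩, -⟩ := hfact i a b hab
      exact ⟨⟨u, Fin.cast (congrArg m hu.symm) a⟩, ⟨u, Fin.cast (congrArg m hu.symm) b⟩,
        Or.inr ⟨rfl, hadj⟩, congrArg (zykE m) (hcast2 u i hu a),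
        congrArg (zykE m) (hcast2 u i hu b)⟩
    · obtain ⟨u, v, huv, hu, hv⟩ := hcomp i j hij
      exact ⟨⟨u, Fin.cast (congrArg m hu.symm) a⟩, ⟨v, Fin.cast (congrArg m hv.symm) b⟩,
        Or.inl huv, congrArg (zykE m) (hcast2 u i hu a), congrArg (zykE m) (hcast2 v j hv b)⟩
  -- acyclicity of ς
  have hςac : (zykovSum D H).IsAcyclicColoring ς := by
    intro P
    rintro ⟨x, hx⟩
    obtain ⟨⟨i, a⟩, rfl⟩ := (zykE m).surjective P
    refine hac i ⟨x.1, ?_⟩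
    refine Relation.TransGen.lift Sigma.fst ?_ x x hx
    rintro ⟨u, av⟩ ⟨v, bv⟩ ⟨hy, hz, hadj⟩
    have hy' : (⟨c u, av⟩ : Σ i, Fin (m i)) = ⟨i, a⟩ := (zykE m).injective hy
    have hz' : (⟨c v, bv⟩ : Σ i, Fin (m i)) = ⟨i, a⟩ := (zykE m).injective hz
    obtain ⟨hcu, hvu⟩ := hval _ _ _ _ hy'
    obtain ⟨hcv, hvv⟩ := hval _ _ _ _ hz'
    refine ⟨hcu, hcv, ?_⟩
    have hadj' : D.Adj u v ∨ ∃ h : u = v, (H v).Adj (h ▸ av) bv := hadj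
    rcases hadj' with h | ⟨h, ha⟩
    · exact h
    · exfalso
      subst h
      have hab : av = bv := Fin.ext (hvu.trans hvv.symm)
      subst hab
      exact hloop u av ha
  -- harmoniousness of ς
  have harm : ∀ x y x' y' : Σ u : V, Fin (m (c u)), (zykovSum D H).Adj x y →
      (zykovSum D H).Adj x' y' → ς x = ς x' → ς y = ς y' → x = x' ∧ y = y' := by
    rintro ⟨u, a⟩ ⟨v, b⟩ ⟨u', a'⟩ ⟨v', b'⟩ hxy hxy' hx hy
    obtain ⟨hcu, hva⟩ := hςeq _ _ hx
    obtain ⟨hcv, hvb⟩ := hςeq _ _ hy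
    have hxy2 : D.Adj u v ∨ ∃ h : u = v, (H v).Adj (h ▸ a) b := hxy
    have hxy2' : D.Adj u' v' ∨ ∃ h : u' = v', (H v').Adj (h ▸ a') b' := hxy'
    rcases hxy2 with h1 | ⟨h1, ha1⟩
    · rcases hxy2' with h2 | ⟨h2, ha2⟩
      · obtain ⟨rfl, rfl⟩ := hcU u v u' v' h1 h2 hcu hcv
        have e1 : a = a' := Fin.ext hva
        have e2 : b = b' := Fin.ext hvb
        subst e1; subst e2
        exact ⟨rfl, rfl⟩
      · exfalso
        subst h2
        exact hcP u v h1 (hcu.trans hcv.symm)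
    · rcases hxy2' with h2 | ⟨h2, ha2⟩
      · exfalso
        subst h1
        exact hcP u' v' h2 (hcu.symm.trans hcv)
      · subst h1; subst h2
        have hab : a ≠ b := by rintro rfl; exact hloop u a ha1
        obtain ⟨w, -, hwu⟩ := hfact (c u) a b hab
        have hu1 : u = w := hwu u ⟨rfl, ha1⟩
        have hu2 : u' = w := by
          refine hwu u' ⟨hcu.symm, ?_⟩
          have ca : Fin.cast (congrArg m hcu.symm.symm) a = a' := Fin.ext (by simpa using hva)
          have cb : Fin.cast (congrArg m hcu.symm.symm) b = b' := Fin.ext (by simpa using hvb)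
          rw [ca, cb]
          exact ha2
        have huu : u = u' := hu1.trans hu2.symm
        subst huu
        have e1 : a = a' := Fin.ext hva
        have e2 : b = b' := Fin.ext hvb
        subst e1; subst e2
        exact ⟨rfl, rfl⟩
  -- arc count bound for the Zykov sum
  have harcs : (zykovSum D H).arcCount ≤ (∑ i, m i) * ((∑ i, m i) - 1) := by
    rw [← card_ne_pairs (∑ i, m i)]
    refine Nat.card_le_card_of_injective
      (fun p => ⟨(ς p.1.1, ς p.1.2), hςP _ _ p.2⟩) ?_
    rintro ⟨⟨x, y⟩, hp⟩ ⟨⟨x', y'⟩, hq⟩ h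
    simp only [Subtype.mk.injEq, Prod.mk.injEq] at h
    obtain ⟨e1, e2⟩ := harm x y x' y' hp hq h.1 h.2
    simp [e1, e2]
  have hdacZ : (zykovSum D H).diachromaticNumber = ∑ i, m i := by
    refine le_antisymm ?_ (dac_ge' _ ς hςac hςcomp)
    refine csSup_le' ?_
    rintro N ⟨c', -, hc'⟩
    have h1 := complete_bound' _ c' hc'
    by_contra hlt
    push_neg at hlt
    have h2 : (∑ i, m i) * ((∑ i, m i) - 1) < (∑ i, m i) * (∑ i, m i) :=
      mul_lt_mul_of_pos_left (by omega) (by omega)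
    have h3 : (∑ i, m i) * (∑ i, m i) ≤ N * (N - 1) :=
      Nat.mul_le_mul (by omega) (by omega)
    exact absurd (h1.trans harcs) (not_le.mpr (h2.trans_le h3))
  refine ⟨hdacZ, ?_⟩
  intro x y hxy
  have hne : ς x ≠ ς y := hςP x y hxy
  have harc' : ((zykovSum D H).deleteArc x y).arcCount <
      (∑ i, m i) * ((∑ i, m i) - 1) := by
    have hinj : ((zykovSum D H).deleteArc x y).arcCount ≤
        Nat.card {q : Fin (∑ i, m i) × Fin (∑ i, m i) // q.1 ≠ q.2 ∧ q ≠ (ς x, ς y)} := by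
      refine Nat.card_le_card_of_injective
        (fun p => ⟨(ς p.1.1, ς p.1.2), hςP _ _ p.2.1, ?_⟩) ?_
      · intro hq
        obtain ⟨h1, h2⟩ := Prod.ext_iff.mp hq
        obtain ⟨e1, e2⟩ := harm p.1.1 p.1.2 x y p.2.1 hxy h1 h2
        exact p.2.2 ⟨e1, e2⟩
      · rintro ⟨⟨a1, a2⟩, hp⟩ ⟨⟨b1, b2⟩, hq2⟩ h
        simp only [Subtype.mk.injEq, Prod.mk.injEq] at h
        obtain ⟨e1, e2⟩ := harm a1 a2 b1 b2 hp.1 hq2.1 h.1 h.2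
        simp [e1, e2]
    have hlt2 : Nat.card {q : Fin (∑ i, m i) × Fin (∑ i, m i) // q.1 ≠ q.2 ∧ q ≠ (ς x, ς y)} <
        Nat.card {q : Fin (∑ i, m i) × Fin (∑ i, m i) // q.1 ≠ q.2} := by
      have hsub : {q : Fin (∑ i, m i) × Fin (∑ i, m i) | q.1 ≠ q.2 ∧ q ≠ (ς x, ς y)} ⊂
          {q : Fin (∑ i, m i) × Fin (∑ i, m i) | q.1 ≠ q.2} := by
        constructor
        · rintro q ⟨hq1, -⟩
          exact hq1
        · intro hsup
          exact (hsup (show (ς x, ς y) ∈ {q : Fin (∑ i, m i) × Fin (∑ i, m i) | q.1 ≠ q.2}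
            from hne)).2 rfl
      have := Set.ncard_lt_ncard hsub (Set.toFinite _)
      rwa [← Nat.card_coe_set_eq, ← Nat.card_coe_set_eq] at this
    rw [← card_ne_pairs (∑ i, m i)]
    exact lt_of_le_of_lt hinj hlt2
  have hle : ((zykovSum D H).deleteArc x y).diachromaticNumber ≤ (∑ i, m i) - 1 := by
    refine csSup_le' ?_
    rintro N ⟨c', -, hc'⟩
    have h1 := complete_bound' _ c' hc'
    by_contra hlt
    push_neg at hlt
    have h3 : (∑ i, m i) * ((∑ i, m i) - 1) ≤ N * (N - 1) :=
      Nat.mul_le_mul (by omega) (by omega)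
    exact absurd (h1.trans_lt harc') (not_lt.mpr h3)
  omega
end

section
/- For every n ≥ 2 and every positive integer i, the dichromatic number of C⃗_{n²−n}[C⃗_n]^i equals ⌈((n²−n)/(n²−n−1))·T_n(i)⌉, where T_n is defined by T_n(0)=1 and T_n(i)=⌈(n/(n−1))·T_n(i−1)⌉. -/
/-- The Josephus-type recurrence `T n 0 = 1`, `T n (i+1) = ⌈(n/(n−1)) · T n i⌉`. -/
def T (n : ℕ) : ℕ → ℕ
  | 0 => 1
  | i + 1 => ⌈(n : ℚ) / ((n : ℚ) - 1) * (T n i : ℚ)⌉₊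

/-! ### Auxiliary development -/

open Relation

private def srel {V : Type*} (D : Digraph V) (S : Set V) : V → V → Prop :=
  fun a b => a ∈ S ∧ b ∈ S ∧ D.Adj a b

variable {V W : Type*}

private lemma dirCycle_adj {m : ℕ} {a b : ZMod m} : (dirCycle m).Adj a b ↔ b = a + 1 := Iff.rfl

private lemma dirCycle_struct {m : ℕ} {S : Set (ZMod m)} {x y : ZMod m}
    (h : TransGen (srel (dirCycle m) S) x y) :
    ∃ p : ℕ, 1 ≤ p ∧ y = x + (p : ℕ) ∧ ∀ q : ℕ, q ≤ p → x + (q : ℕ) ∈ S := by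
  induction h with
  | @single b hxb =>
    refine ⟨1, le_refl 1, by push_cast; exact hxb.2.2, ?_⟩
    intro q hq
    interval_cases q
    · simpa using hxb.1
    · push_cast
      rw [← hxb.2.2]
      exact hxb.2.1
  | @tail b c _ hbc ih =>
    obtain ⟨p, hp1, hyp, hcov⟩ := ih
    have hc1 : c = x + ((p + 1 : ℕ) : ZMod m) := by
      rw [hbc.2.2, hyp]; push_cast; ring
    refine ⟨p + 1, by omega, hc1, ?_⟩
    intro q hq
    rcases Nat.lt_or_ge q (p + 1) with h' | h'
    · exact hcov q (by omega)
    · have hqe : q = p + 1 := by omega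
      subst hqe
      rw [← hc1]
      exact hbc.2.1

private lemma dirCycle_chain {m : ℕ} {S : Set (ZMod m)} (hall : ∀ v, v ∈ S) (x : ZMod m) :
    ∀ p : ℕ, 1 ≤ p → TransGen (srel (dirCycle m) S) x (x + (p : ℕ)) := by
  intro p hp
  induction p with
  | zero => omega
  | succ p ih =>
    rcases Nat.eq_zero_or_pos p with h1 | h1
    · subst h1
      refine TransGen.single ⟨hall _, hall _, ?_⟩
      rw [dirCycle_adj]
      push_cast; ring
    · refine TransGen.tail (ih (by omega)) ⟨hall _, hall _, ?_⟩
      rw [dirCycle_adj]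
      push_cast; ring

private lemma dirCycle_cycle_all {m : ℕ} (hm : 1 ≤ m) {S : Set (ZMod m)} {x : ZMod m}
    (h : TransGen (srel (dirCycle m) S) x x) : ∀ v, v ∈ S := by
  haveI : NeZero m := ⟨by omega⟩
  obtain ⟨p, hp1, hpx, hcov⟩ := dirCycle_struct h
  have hp0 : ((p : ℕ) : ZMod m) = 0 := by
    have := hpx.symm
    rwa [add_eq_left] at this
  have hd : m ∣ p := (ZMod.natCast_eq_zero_iff p m).mp hp0
  have hmp : m ≤ p := Nat.le_of_dvd (by omega) hd
  intro v
  have hv : v = x + (((v - x).val : ℕ) : ZMod m) := by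
    rw [ZMod.natCast_val, ZMod.cast_id]; ring
  rw [hv]
  exact hcov (v - x).val (le_trans (le_of_lt (ZMod.val_lt _)) hmp)

private lemma lex_struct {m : ℕ} {H : Digraph W} {S : Set (ZMod m × W)} {x y : ZMod m × W}
    (h : TransGen (srel (lexProd (dirCycle m) H) S) x y) :
    ∃ p : ℕ, y.1 = x.1 + (p : ℕ) ∧ (∀ q : ℕ, q ≤ p → ∃ w, (x.1 + (q : ℕ), w) ∈ S) ∧
      (p = 0 → TransGen (srel H {w | (x.1, w) ∈ S}) x.2 y.2) := by
  induction h with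
  | @single b hxb =>
    rcases hxb with ⟨hxS, hbS, hadj | ⟨h1, h2⟩⟩
    · rw [dirCycle_adj] at hadj
      refine ⟨1, by push_cast; exact hadj, ?_, by omega⟩
      intro q hq
      interval_cases q
      · exact ⟨x.2, by simpa using hxS⟩
      · refine ⟨b.2, ?_⟩
        have hb : b = (x.1 + ((1 : ℕ) : ZMod m), b.2) := by
          rw [Prod.ext_iff]
          exact ⟨by push_cast; exact hadj, rfl⟩
        rw [← hb]
        exact hbS
    · refine ⟨0, by simpa using h1.symm, ?_, ?_⟩
      · intro q hq
        have hq0 : q = 0 := by omega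
        subst hq0
        exact ⟨x.2, by simpa using hxS⟩
      · intro _
        refine TransGen.single ⟨by simpa using hxS, ?_, h2⟩
        show (x.1, b.2) ∈ S
        rw [h1]
        simpa using hbS
  | @tail b c _ hbc ih =>
    obtain ⟨p, hyp, hcov, hH⟩ := ih
    rcases hbc with ⟨hbS, hcS, hadj | ⟨h1, h2⟩⟩
    · rw [dirCycle_adj] at hadj
      have hc1 : c.1 = x.1 + ((p + 1 : ℕ) : ZMod m) := by
        rw [hadj, hyp]; push_cast; ring
      refine ⟨p + 1, hc1, ?_, by omega⟩
      intro q hq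
      rcases Nat.lt_or_ge q (p + 1) with h' | h'
      · exact hcov q (by omega)
      · have hqe : q = p + 1 := by omega
        subst hqe
        refine ⟨c.2, ?_⟩
        rw [← hc1]
        simpa using hcS
    · refine ⟨p, by rw [← h1]; exact hyp, hcov, ?_⟩
      intro hp0
      have hb1 : b.1 = x.1 := by rw [hyp, hp0]; push_cast; ring
      refine TransGen.tail (hH hp0) ⟨?_, ?_, h2⟩
      · show (x.1, b.2) ∈ S
        rw [← hb1]
        simpa using hbS
      · show (x.1, c.2) ∈ S
        rw [← hb1, h1]
        simpa using hcS

private lemma lex_all_not_acyclic {m : ℕ} (hm : 1 ≤ m) {H : Digraph W}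
    {S : Set (ZMod m × W)} (hall : ∀ v : ZMod m, ∃ w, (v, w) ∈ S) :
    ¬ (lexProd (dirCycle m) H).AcyclicOn S := by
  haveI : NeZero m := ⟨by omega⟩
  choose f hf using hall
  intro hac
  have chain : ∀ p : ℕ, 1 ≤ p →
      TransGen (srel (lexProd (dirCycle m) H) S) (0, f 0) ((p : ZMod m), f (p : ZMod m)) := by
    intro p hp
    induction p with
    | zero => omega
    | succ p ih =>
      rcases Nat.eq_zero_or_pos p with h1 | h1
      · subst h1
        refine TransGen.single ⟨hf 0, hf _, Or.inl ?_⟩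
        rw [dirCycle_adj]
        push_cast; ring
      · refine TransGen.tail (ih (by omega)) ⟨hf _, hf _, Or.inl ?_⟩
        rw [dirCycle_adj]
        push_cast; ring
  have hcyc := chain m (by omega)
  rw [ZMod.natCast_self] at hcyc
  exact hac ⟨(0, f 0), hcyc⟩

private lemma acyclicOn_mono {V : Type*} {D : Digraph V} {S T : Set V} (h : S ⊆ T)
    (hT : D.AcyclicOn T) : D.AcyclicOn S := by
  rintro ⟨v, hv⟩
  exact hT ⟨v, TransGen.mono (fun a b hab => ⟨h hab.1, h hab.2.1, hab.2.2⟩) _ _ hv⟩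

private lemma lex_copy_acyclic {V W : Type*} {D : Digraph V} {H : Digraph W} {S : Set (V × W)}
    (hS : (lexProd D H).AcyclicOn S) (v : V) : H.AcyclicOn {w | (v, w) ∈ S} := by
  rintro ⟨w, hw⟩
  refine hS ⟨(v, w), TransGen.lift (fun w => (v, w)) (fun a b hab => ?_) _ _ hw⟩
  exact ⟨hab.1, hab.2.1, Or.inr ⟨rfl, hab.2.2⟩⟩

private lemma isAcyclicColoring_comp {V V' : Type*} {D : Digraph V} {D' : Digraph V'}
    (e : V ≃ V') (he : ∀ a b, D.Adj a b ↔ D'.Adj (e a) (e b)) {k : ℕ} {c : V' → Fin k}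
    (hc : D'.IsAcyclicColoring c) : D.IsAcyclicColoring (fun v => c (e v)) := by
  intro i hcyc
  rcases hcyc with ⟨v, hv⟩
  refine hc i ⟨e v, TransGen.lift e (fun a b hab => ?_) _ _ hv⟩
  exact ⟨hab.1, hab.2.1, (he a b).mp hab.2.2⟩
private lemma dc_congr {V V' : Type*} {D : Digraph V} {D' : Digraph V'}
    (e : V ≃ V') (he : ∀ a b, D.Adj a b ↔ D'.Adj (e a) (e b)) :
    D.dichromaticNumber = D'.dichromaticNumber := by
  unfold Digraph.dichromaticNumber
  congr 1
  ext k
  constructor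
  · rintro ⟨c, hc⟩
    refine ⟨fun v' => c (e.symm v'), ?_⟩
    have he' : ∀ a b, D'.Adj a b ↔ D.Adj (e.symm a) (e.symm b) := by
      intro a b
      rw [he (e.symm a) (e.symm b)]
      simp
    exact isAcyclicColoring_comp e.symm he' hc
  · rintro ⟨c, hc⟩
    exact ⟨fun v => c (e v), isAcyclicColoring_comp e he hc⟩

section Part2
variable {V W : Type*}

private lemma dc_le {D : Digraph V} {k : ℕ} (h : ∃ c : V → Fin k, D.IsAcyclicColoring c) :
    D.dichromaticNumber ≤ k := Nat.sInf_le h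

/-- `dc(C⃗_n) = 2` for `n ≥ 2`, together with an explicit 2-coloring. -/
private lemma dirCycle_coloring {n : ℕ} (hn : 2 ≤ n) :
    ∃ c : ZMod n → Fin 2, (dirCycle n).IsAcyclicColoring c := by
  haveI : NeZero n := ⟨by omega⟩
  haveI : Fact (1 < n) := ⟨by omega⟩
  refine ⟨fun v => if v = 0 then 0 else 1, fun i => ?_⟩
  rintro ⟨v, hv⟩
  have hall := dirCycle_cycle_all (by omega) hv
  have h0 : (0 : Fin 2) = i := by simpa using hall 0
  have h1 : (1 : Fin 2) = i := by
    simpa [(one_ne_zero : (1 : ZMod n) ≠ 0)] using hall 1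
  rw [← h0] at h1
  exact absurd h1 (by decide)

private lemma dirCycle_dc {n : ℕ} (hn : 2 ≤ n) : (dirCycle n).dichromaticNumber = 2 := by
  haveI : NeZero n := ⟨by omega⟩
  refine le_antisymm (dc_le (dirCycle_coloring hn)) ?_
  refine le_csInf ⟨2, dirCycle_coloring hn⟩ ?_
  rintro k ⟨c, hc⟩
  by_contra hk
  interval_cases k
  · exact (c 0).elim0
  · have hall : ∀ v : ZMod n, v ∈ {v | c v = c 0} := by
      intro v
      simp only [Set.mem_setOf_eq]
      exact Subsingleton.elim _ _
    have := dirCycle_chain hall 0 n (by omega)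
    rw [ZMod.natCast_self, add_zero] at this
    exact hc (c 0) ⟨0, this⟩

/-- The shift equivalence `iterType V W (j+1) ≃ V × iterType W W j`. -/
private def shiftEquiv (V W : Type u) : (j : ℕ) → iterType V W (j + 1) ≃ V × iterType W W j
  | 0 => Equiv.refl (V × W)
  | j + 1 => (Equiv.prodCongr (shiftEquiv V W j) (Equiv.refl W)).trans
      (Equiv.prodAssoc V (iterType W W j) W)

private lemma shiftEquiv_adj {V W : Type u} (D : Digraph V) (H : Digraph W) :
    ∀ (j : ℕ) (a b : iterType V W (j + 1)),
      (iterLex D H (j + 1)).Adj a b ↔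
        (lexProd D (iterLex H H j)).Adj (shiftEquiv V W j a) (shiftEquiv V W j b) := by
  intro j
  induction j with
  | zero => intro a b; exact Iff.rfl
  | succ j ih =>
    intro a b
    have hinj : a.1 = b.1 ↔ shiftEquiv V W j a.1 = shiftEquiv V W j b.1 :=
      (Equiv.apply_eq_iff_eq _).symm
    have hlex : ∀ (x y : V × iterType W W j), (lexProd D (iterLex H H j)).Adj x y ↔
        D.Adj x.1 y.1 ∨ (x.1 = y.1 ∧ (iterLex H H j).Adj x.2 y.2) := fun _ _ => Iff.rfl
    show (iterLex D H (j + 1)).Adj a.1 b.1 ∨ (a.1 = b.1 ∧ H.Adj a.2 b.2) ↔ _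
    rw [ih a.1 b.1, hlex, hinj]
    show _ ↔ D.Adj (shiftEquiv V W j a.1).1 (shiftEquiv V W j b.1).1 ∨
      ((shiftEquiv V W j a.1).1 = (shiftEquiv V W j b.1).1 ∧
        ((iterLex H H j).Adj (shiftEquiv V W j a.1).2 (shiftEquiv V W j b.1).2 ∨
          ((shiftEquiv V W j a.1).2 = (shiftEquiv V W j b.1).2 ∧ H.Adj a.2 b.2)))
    rw [Prod.ext_iff]
    tauto

private lemma iterLex_dc_shift {V W : Type u} (D : Digraph V) (H : Digraph W) (j : ℕ) :
    (iterLex D H (j + 1)).dichromaticNumber =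
      (lexProd D (iterLex H H j)).dichromaticNumber :=
  dc_congr (shiftEquiv V W j) (shiftEquiv_adj D H j)

end Part2

section Part3
variable {W : Type*}

private lemma mod_inj {k a j1 j2 : ℕ} (h1 : j1 < k) (h2 : j2 < k)
    (h : (a + j1) % k = (a + j2) % k) : j1 = j2 := by
  have h' : j1 ≡ j2 [MOD k] := Nat.ModEq.add_left_cancel' a h
  rw [Nat.ModEq] at h'
  rwa [Nat.mod_eq_of_lt h1, Nat.mod_eq_of_lt h2] at h'

private lemma arith_facts {m t : ℕ} (hm : 2 ≤ m) (ht : 1 ≤ t) :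
    t < ⌈(m : ℚ) / ((m : ℚ) - 1) * t⌉₊ ∧
      m * t ≤ ⌈(m : ℚ) / ((m : ℚ) - 1) * t⌉₊ * (m - 1) := by
  have hm2 : (2 : ℚ) ≤ (m : ℚ) := by exact_mod_cast hm
  have hm1 : (0 : ℚ) < (m : ℚ) - 1 := by linarith
  have ht0 : (0 : ℚ) < (t : ℚ) := by exact_mod_cast ht
  have hq1 : (t : ℚ) < (m : ℚ) / ((m : ℚ) - 1) * t := by
    have h1 : 1 < (m : ℚ) / ((m : ℚ) - 1) := (one_lt_div hm1).mpr (by linarith)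
    nlinarith
  have hqle : (m : ℚ) / ((m : ℚ) - 1) * t ≤ (⌈(m : ℚ) / ((m : ℚ) - 1) * t⌉₊ : ℚ) :=
    Nat.le_ceil _
  constructor
  · exact_mod_cast lt_of_lt_of_le hq1 hqle
  · have hqeq : (m : ℚ) / ((m : ℚ) - 1) * t * ((m : ℚ) - 1) = (m : ℚ) * t := by
      field_simp
    have h2 : (m : ℚ) * t ≤ (⌈(m : ℚ) / ((m : ℚ) - 1) * t⌉₊ : ℚ) * ((m : ℚ) - 1) := by
      rw [← hqeq]
      exact mul_le_mul_of_nonneg_right hqle (le_of_lt hm1)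
    have h5 : (((m * t : ℕ)) : ℚ) ≤ ((⌈(m : ℚ) / ((m : ℚ) - 1) * t⌉₊ * (m - 1) : ℕ) : ℚ) := by
      rw [Nat.cast_mul, Nat.cast_mul, Nat.cast_sub (by omega : 1 ≤ m), Nat.cast_one]
      exact h2
    exact_mod_cast h5

private lemma ceil_le_of_count {m t k : ℕ} (hm : 2 ≤ m) (h : m * t ≤ k * (m - 1)) :
    ⌈(m : ℚ) / ((m : ℚ) - 1) * t⌉₊ ≤ k := by
  have hm2 : (2 : ℚ) ≤ (m : ℚ) := by exact_mod_cast hm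
  have hm1 : (0 : ℚ) < (m : ℚ) - 1 := by linarith
  rw [Nat.ceil_le, div_mul_eq_mul_div, div_le_iff₀ hm1]
  have h' : ((m * t : ℕ) : ℚ) ≤ ((k * (m - 1) : ℕ) : ℚ) := by exact_mod_cast h
  rw [Nat.cast_mul, Nat.cast_mul, Nat.cast_sub (by omega : 1 ≤ m), Nat.cast_one] at h'
  linarith

/-- Lower bound: any acyclic `k`-coloring of `C⃗ₘ[H]` satisfies `m·dc(H) ≤ k·(m−1)`. -/
private lemma lemA_lb {m t k : ℕ} (hm : 2 ≤ m) {H : Digraph W}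
    (hdc : H.dichromaticNumber = t) {c : ZMod m × W → Fin k}
    (hc : (lexProd (dirCycle m) H).IsAcyclicColoring c) :
    m * t ≤ k * (m - 1) := by
  classical
  haveI : NeZero m := ⟨by omega⟩
  set A : ZMod m → Finset (Fin k) :=
    fun v => Finset.univ.filter (fun i => ∃ w, c (v, w) = i) with hA
  have hAcard : ∀ v, t ≤ (A v).card := by
    intro v
    have hmem : ∀ w, c (v, w) ∈ A v := by
      intro w
      simp only [hA, Finset.mem_filter, Finset.mem_univ, true_and]
      exact ⟨w, rfl⟩
    set e := (A v).equivFin with he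
    set c' : W → Fin (A v).card := fun w => e ⟨c (v, w), hmem w⟩ with hc'
    have hac' : H.IsAcyclicColoring c' := by
      intro j
      have hsub : {w | c' w = j} ⊆ {w | (v, w) ∈ {x | c x = ((e.symm j : {x // x ∈ A v}) : Fin k)}} := by
        intro w hw
        simp only [Set.mem_setOf_eq] at hw ⊢
        have h1 : (⟨c (v, w), hmem w⟩ : {x // x ∈ A v}) = e.symm j := by
          rw [← hw]
          simp [hc']
        exact congrArg Subtype.val h1
      exact acyclicOn_mono hsub (lex_copy_acyclic (hc _) v)
    have hle : H.dichromaticNumber ≤ (A v).card := Nat.sInf_le ⟨c', hac'⟩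
    omega
  have hmiss : ∀ i : Fin k, ∃ v, i ∉ A v := by
    intro i
    by_contra hbad
    push_neg at hbad
    refine lex_all_not_acyclic (by omega) (S := {x | c x = i}) ?_ (hc i)
    intro v
    have hv := hbad v
    simp only [hA, Finset.mem_filter, Finset.mem_univ, true_and] at hv
    obtain ⟨w, hw⟩ := hv
    exact ⟨w, hw⟩
  have hsum1 : m * t ≤ ∑ v : ZMod m, (A v).card := by
    have h1 : ∑ _v : ZMod m, t ≤ ∑ v : ZMod m, (A v).card :=
      Finset.sum_le_sum (fun v _ => hAcard v)
    simpa [Finset.sum_const, Finset.card_univ, ZMod.card, mul_comm] using h1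
  have hsum2 : ∑ v : ZMod m, (A v).card
      = ∑ i : Fin k, (Finset.univ.filter (fun v : ZMod m => i ∈ A v)).card := by
    calc ∑ v : ZMod m, (A v).card
        = ∑ v : ZMod m, ∑ i : Fin k, if i ∈ A v then 1 else 0 := by
          refine Finset.sum_congr rfl (fun v _ => ?_)
          rw [← Finset.card_filter]
          congr 1
          ext a
          simp
      _ = ∑ i : Fin k, ∑ v : ZMod m, if i ∈ A v then 1 else 0 := Finset.sum_comm
      _ = ∑ i : Fin k, (Finset.univ.filter (fun v : ZMod m => i ∈ A v)).card := by
          refine Finset.sum_congr rfl (fun i _ => ?_)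
          rw [Finset.card_filter]
  have hsum3 : ∀ i : Fin k,
      (Finset.univ.filter (fun v : ZMod m => i ∈ A v)).card ≤ m - 1 := by
    intro i
    obtain ⟨vi, hvi⟩ := hmiss i
    have hsub : (Finset.univ.filter (fun v : ZMod m => i ∈ A v)) ⊆ Finset.univ.erase vi := by
      intro v hv
      rw [Finset.mem_filter] at hv
      rw [Finset.mem_erase]
      exact ⟨fun h => hvi (h ▸ hv.2), Finset.mem_univ v⟩
    have := Finset.card_le_card hsub
    rwa [Finset.card_erase_of_mem (Finset.mem_univ vi), Finset.card_univ, ZMod.card] at this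
  calc m * t ≤ ∑ v : ZMod m, (A v).card := hsum1
    _ = ∑ i : Fin k, (Finset.univ.filter (fun v : ZMod m => i ∈ A v)).card := hsum2
    _ ≤ ∑ _i : Fin k, (m - 1) := Finset.sum_le_sum (fun i _ => hsum3 i)
    _ = k * (m - 1) := by simp [Finset.sum_const, Finset.card_univ, mul_comm]

/-- Upper bound: explicit acyclic coloring of `C⃗ₘ[H]` with `⌈m/(m−1)·t⌉` colors. -/
private lemma lemA_ub {m t : ℕ} (hm : 2 ≤ m) (ht : 1 ≤ t) {H : Digraph W}
    (hex : ∃ h : W → Fin t, H.IsAcyclicColoring h) :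
    ∃ c : ZMod m × W → Fin ⌈(m : ℚ) / ((m : ℚ) - 1) * t⌉₊,
      (lexProd (dirCycle m) H).IsAcyclicColoring c := by
  classical
  obtain ⟨h, hh⟩ := hex
  haveI : NeZero m := ⟨by omega⟩
  obtain ⟨hkt, hkmt⟩ := arith_facts hm ht
  set k := ⌈(m : ℚ) / ((m : ℚ) - 1) * t⌉₊ with hk
  have hk0 : 0 < k := by omega
  have htk : t ≤ k := by omega
  set c0 : ZMod m × W → Fin k :=
    fun x => ⟨(x.1.val * t + (h x.2).val) % k, Nat.mod_lt _ hk0⟩ with hc0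
  refine ⟨c0, ?_⟩
  intro i
  rintro ⟨x, hx⟩
  obtain ⟨p, hp, hcov, hH⟩ := lex_struct hx
  rcases Nat.eq_zero_or_pos p with hp0 | hp1
  · -- a cycle within one copy of `H`
    subst hp0
    have hcyc := hH rfl
    have hx2 : x.2 ∈ {w | (x.1, w) ∈ {y | c0 y = i}} := by
      cases hcyc with
      | single h1 => exact h1.1
      | tail _ h1 => exact h1.2.1
    have hkey : ∀ w, w ∈ {w | (x.1, w) ∈ {y | c0 y = i}} → h w = h x.2 := by
      intro w hw
      have e1 : (x.1.val * t + (h w).val) % k = i.val := congrArg Fin.val hw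
      have e2 : (x.1.val * t + (h x.2).val) % k = i.val := congrArg Fin.val hx2
      exact Fin.ext (mod_inj (lt_of_lt_of_le (h w).isLt htk)
        (lt_of_lt_of_le (h x.2).isLt htk) (e1.trans e2.symm))
    have hsub : {w | (x.1, w) ∈ {y | c0 y = i}} ⊆ {w | h w = h x.2} :=
      fun w hw => hkey w hw
    exact acyclicOn_mono hsub (hh (h x.2)) ⟨x.2, hcyc⟩
  · -- a cycle passing through all copies: counting contradiction
    have hpz : ((p : ℕ) : ZMod m) = 0 := by
      have h1 : x.1 + (p : ℕ) = x.1 := hp.symm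
      rwa [add_eq_left] at h1
    have hmp : m ≤ p :=
      Nat.le_of_dvd (by omega) ((ZMod.natCast_eq_zero_iff p m).mp hpz)
    have hall : ∀ v : ZMod m, ∃ w, (v, w) ∈ {y | c0 y = i} := by
      intro v
      have hv : v = x.1 + (((v - x.1).val : ℕ) : ZMod m) := by
        rw [ZMod.natCast_val, ZMod.cast_id]; ring
      rw [hv]
      exact hcov (v - x.1).val (le_trans (le_of_lt (ZMod.val_lt _)) hmp)
    choose f hf using hall
    set ψ : ZMod m → ℕ := fun v => v.val * t + (h (f v)).val with hψ
    have hψmod : ∀ v, ψ v % k = i.val := fun v => congrArg Fin.val (hf v)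
    have hψlt : ∀ v, ψ v < k * (m - 1) := by
      intro v
      have h1 : v.val < m := ZMod.val_lt v
      have h2 : (h (f v)).val < t := (h (f v)).isLt
      have h3 : ψ v < m * t := by
        have : ψ v < (v.val + 1) * t := by
          simp only [hψ]
          nlinarith
        calc ψ v < (v.val + 1) * t := this
          _ ≤ m * t := Nat.mul_le_mul_right t (by omega)
      have h4 : m * t ≤ k * (m - 1) := hkmt
      omega
    set F : Finset ℕ := (Finset.range (m - 1)).image (fun l => l * k + i.val) with hF
    have hFcard : F.card = m - 1 := by
      rw [hF, Finset.card_image_of_injective _ ?_, Finset.card_range]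
      intro a b hab
      exact Nat.eq_of_mul_eq_mul_right hk0 (Nat.add_right_cancel hab)
    have hmemF : ∀ v, ψ v ∈ F := by
      intro v
      rw [hF, Finset.mem_image]
      refine ⟨ψ v / k, Finset.mem_range.mpr ?_, ?_⟩
      · rw [Nat.div_lt_iff_lt_mul hk0]
        rw [mul_comm]
        exact hψlt v
      · conv_rhs => rw [← Nat.div_add_mod (ψ v) k]
        rw [hψmod v, mul_comm]
    have hinj : Set.InjOn ψ (Finset.univ : Finset (ZMod m)) := by
      intro v _ v' _ hvv
      have ht0 : 0 < t := by omega
      have hval : v.val = v'.val := by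
        have h1 : ψ v / t = v.val := by
          simp only [hψ]
          rw [add_comm, Nat.add_mul_div_right _ _ ht0,
            Nat.div_eq_of_lt (h (f v)).isLt, zero_add]
        have h2 : ψ v' / t = v'.val := by
          simp only [hψ]
          rw [add_comm, Nat.add_mul_div_right _ _ ht0,
            Nat.div_eq_of_lt (h (f v')).isLt, zero_add]
        rw [← h1, ← h2, hvv]
      have h3 : ((v.val : ℕ) : ZMod m) = ((v'.val : ℕ) : ZMod m) := by rw [hval]
      rwa [ZMod.natCast_val, ZMod.cast_id, ZMod.natCast_val, ZMod.cast_id] at h3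
    have hcard := Finset.card_le_card_of_injOn ψ (fun v _ => hmemF v) hinj
    rw [Finset.card_univ, ZMod.card, hFcard] at hcard
    omega

/-- `dc(C⃗ₘ[H]) = ⌈m/(m−1) · dc(H)⌉`. -/
private lemma lemA {m t : ℕ} (hm : 2 ≤ m) (ht : 1 ≤ t) {H : Digraph W}
    (hdc : H.dichromaticNumber = t) (hex : ∃ h : W → Fin t, H.IsAcyclicColoring h) :
    (lexProd (dirCycle m) H).dichromaticNumber = ⌈(m : ℚ) / ((m : ℚ) - 1) * t⌉₊ := by
  refine le_antisymm (dc_le (lemA_ub hm ht hex)) ?_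
  refine le_csInf ⟨_, lemA_ub hm ht hex⟩ ?_
  rintro k ⟨c, hc⟩
  exact ceil_le_of_count hm (lemA_lb hm hdc hc)

end Part3

section Final

private lemma T_succ (n j : ℕ) : T n (j + 1) = ⌈(n : ℚ) / ((n : ℚ) - 1) * (T n j : ℚ)⌉₊ := rfl

private lemma T_pos {n : ℕ} (hn : 2 ≤ n) : ∀ j, 1 ≤ T n j
  | 0 => le_refl 1
  | j + 1 => by
    rw [T_succ]
    refine Nat.ceil_pos.mpr ?_
    have h1 : (0 : ℚ) < (n : ℚ) - 1 := by
      have : (2 : ℚ) ≤ (n : ℚ) := by exact_mod_cast hn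
      linarith
    have h2 : (0 : ℚ) < (T n j : ℚ) := by exact_mod_cast T_pos hn j
    positivity

private lemma inner_dc {n : ℕ} (hn : 2 ≤ n) (j : ℕ) :
    (iterLex (dirCycle n) (dirCycle n) j).dichromaticNumber = T n (j + 1) ∧
    ∃ c : iterType (ZMod n) (ZMod n) j → Fin (T n (j + 1)),
      (iterLex (dirCycle n) (dirCycle n) j).IsAcyclicColoring c := by
  induction j with
  | zero =>
    have hT1 : T n 1 = 2 := by
      rw [T_succ]
      have h1 : (0 : ℚ) < (n : ℚ) - 1 := by
        have : (2 : ℚ) ≤ (n : ℚ) := by exact_mod_cast hn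
        linarith
      have h2 : (2 : ℚ) ≤ (n : ℚ) := by exact_mod_cast hn
      rw [show ((T n 0 : ℕ) : ℚ) = 1 from by norm_num [T], mul_one,
        Nat.ceil_eq_iff (by norm_num)]
      constructor
      · rw [show ((2 - 1 : ℕ) : ℚ) = 1 from by norm_num, lt_div_iff₀ h1]
        linarith
      · rw [div_le_iff₀ h1]
        push_cast
        linarith
    rw [hT1]
    exact ⟨dirCycle_dc hn, dirCycle_coloring hn⟩
  | succ j ih =>
    obtain ⟨hdc, hex⟩ := ih
    have hshift := iterLex_dc_shift (dirCycle n) (dirCycle n) j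
    have hlem := lemA hn (T_pos hn (j + 1)) hdc hex
    refine ⟨by rw [hshift, hlem, T_succ n (j + 1)], ?_⟩
    obtain ⟨c, hc⟩ := lemA_ub hn (T_pos hn (j + 1)) hex
    rw [T_succ n (j + 1)]
    exact ⟨_, isAcyclicColoring_comp (shiftEquiv _ _ j)
      (shiftEquiv_adj (dirCycle n) (dirCycle n) j) hc⟩

end Final

/-- for `n ≥ 2` and `i ≥ 1`,
`dc(C⃗_{n²−n}[C⃗_n]^i) = ⌈((n²−n)/(n²−n−1)) · T n i⌉`. -/
theorem stmt19 (n : ℕ) (hn : 2 ≤ n) (i : ℕ) (hi : 1 ≤ i) :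
    (iterLex (dirCycle (n ^ 2 - n)) (dirCycle n) i).dichromaticNumber =
      ⌈(((n ^ 2 - n : ℕ)) : ℚ) / (((n ^ 2 - n : ℕ) : ℚ) - 1) * (T n i : ℚ)⌉₊ := by
  obtain ⟨j, rfl⟩ : ∃ j, i = j + 1 := ⟨i - 1, by omega⟩
  have hm2 : 2 ≤ n ^ 2 - n := by
    have h1 : n ^ 2 = n * n := sq n
    have h2 : 2 * n ≤ n * n := Nat.mul_le_mul_right n hn
    omega
  obtain ⟨hdc, hex⟩ := inner_dc hn j
  rw [iterLex_dc_shift (dirCycle (n ^ 2 - n)) (dirCycle n) j,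
    lemA hm2 (T_pos hn (j + 1)) hdc hex]
end
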